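/- arXiv:2104.03430 — 3 statements merged into one kernel-verified Lean document; each statement's English description precedes it below -/
import Mathlib

section
/- For every real number x with 0 ≤ x < 1, the series ∑_{j=0}^∞ ((3/2)_j (1)_j / ((2)_j)^2) · x^(j+1) converges and equals -4·log((1 + √(1−x))/2). In hypergeometric notation: x · ₃F₂(1,1,3/2; 2,2; x) = −4·log((1+√(1−x))/2). -/
/-!
The `j`-th coefficient equals `2 c_{j+1} / (j + 1)`, where `c_n = (1/2)_n / n!` is the `n`-th
coefficient of the binomial series of `(1 - x)^(-1/2)`. Hence the series is the antiderivative,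
vanishing at `0`, of `2 ((1 - x)^(-1/2) - 1) / x = 2 / (√(1 - x) (1 + √(1 - x)))`, which is
also the derivative of `-4 log ((1 + √(1 - x)) / 2)`.
-/

/-- The rising factorial (Pochhammer symbol): `(a)_0 = 1`, `(a)_{n+1} = (a)_n * (a + n)`. -/
def rf (a : ℝ) : ℕ → ℝ
  | 0 => 1
  | n + 1 => rf a n * (a + n)

open Real Set
open scoped Nat

lemma rf_eq_ascPochhammer_eval (a : ℝ) (n : ℕ) : rf a n = (ascPochhammer ℝ n).eval a := by
  induction n with
  | zero => simp [rf]
  | succ n ih => rw [rf, ih, ascPochhammer_succ_eval]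

lemma rf_eq_factorial_mul_choose (a : ℝ) (n : ℕ) : rf a n = n ! * Ring.choose (a + n - 1) n := by
  rw [rf_eq_ascPochhammer_eval, ← Polynomial.ascPochhammer_smeval_eq_eval,
    ← Ring.factorial_nsmul_multichoose_eq_ascPochhammer, Ring.multichoose_eq, nsmul_eq_mul]

lemma rf_succ_left (a : ℝ) (n : ℕ) : rf a (n + 1) = a * rf (a + 1) n := by
  simp [rf_eq_ascPochhammer_eval, ascPochhammer_succ_left]

lemma rf_one (n : ℕ) : rf 1 n = n ! := by
  rw [rf_eq_ascPochhammer_eval, ascPochhammer_eval_one]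

lemma rf_two (n : ℕ) : rf 2 n = (n + 1)! := by
  rw [← rf_one, rf_succ_left]
  norm_num

lemma rf_nonneg {a : ℝ} (ha : 0 ≤ a) (n : ℕ) : 0 ≤ rf a n := by
  induction n with
  | zero => simp [rf]
  | succ n ih => rw [rf]; positivity

lemma rf_le_rf {a b : ℝ} (ha : 0 ≤ a) (hab : a ≤ b) (n : ℕ) : rf a n ≤ rf b n := by
  induction n with
  | zero => simp [rf]
  | succ n ih =>
    have := rf_nonneg (ha.trans hab) n
    rw [rf, rf]
    gcongr

lemma abs_rf_div_factorial_le_one {a : ℝ} (ha₀ : 0 ≤ a) (ha₁ : a ≤ 1) (n : ℕ) :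
    |rf a n / n !| ≤ 1 := by
  rw [abs_of_nonneg (by have := rf_nonneg ha₀ n; positivity), div_le_one (by positivity), ← rf_one]
  exact rf_le_rf ha₀ ha₁ n

lemma hasSum_rf_div_factorial_mul_pow (a : ℝ) {x : ℝ} (hx : |x| < 1) :
    HasSum (fun n => rf a n / n ! * x ^ n) ((1 - x) ^ a)⁻¹ := by
  have hmem : x ∈ Metric.eball (0 : ℝ) 1 := by
    simpa [enorm_eq_nnnorm, ← NNReal.coe_lt_coe] using hx
  have := (one_div_one_sub_rpow_hasFPowerSeriesOnBall_zero a).hasSum hmem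
  simp only [FormalMultilinearSeries.apply_eq_prod_smul_coeff, Finset.prod_const,
    Finset.card_univ, Fintype.card_fin, FormalMultilinearSeries.coeff_ofScalars, smul_eq_mul,
    zero_add, one_div] at this
  convert! this using 2 with n
  rw [rf_eq_factorial_mul_choose]
  field_simp

lemma abs_mul_pow_le {c C y r : ℝ} (hc : |c| ≤ C) (hy : |y| ≤ r) (n : ℕ) :
    |c * y ^ n| ≤ C * r ^ n := by
  rw [abs_mul, abs_pow]
  exact mul_le_mul hc (pow_le_pow_left₀ (abs_nonneg y) hy n) (by positivity)
    ((abs_nonneg c).trans hc)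

lemma summable_mul_pow_of_abs_le {c : ℕ → ℝ} {C : ℝ} (hc : ∀ n, |c n| ≤ C) {x : ℝ}
    (hx : |x| < 1) : Summable fun n => c n * x ^ n :=
  .of_norm_bounded ((summable_geometric_of_lt_one (abs_nonneg x) hx).mul_left C)
    fun n => abs_mul_pow_le (hc n) le_rfl n

lemma hasDerivAt_tsum_div_succ_mul_pow_succ {c : ℕ → ℝ} {C : ℝ} (hc : ∀ n, |c n| ≤ C) {x : ℝ}
    (hx : |x| < 1) :
    HasDerivAt (fun y => ∑' n, c n / (n + 1) * y ^ (n + 1)) (∑' n, c n * x ^ n) x := by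
  obtain ⟨r, hxr, hr⟩ := exists_between hx
  have hr₀ : 0 < r := (abs_nonneg x).trans_lt hxr
  refine hasDerivAt_tsum_of_isPreconnected (u := fun n => C * r ^ n)
    (g := fun n y => c n / (n + 1) * y ^ (n + 1)) (y₀ := 0)
    ((summable_geometric_of_lt_one hr₀.le hr).mul_left C) isOpen_Ioo isPreconnected_Ioo
    (fun n y _ => ?_) (fun n y hy => abs_mul_pow_le (hc n) (abs_le.2 ⟨hy.1.le, hy.2.le⟩) n)
    ⟨neg_lt_zero.2 hr₀, hr₀⟩ (by simp) (abs_lt.1 hxr)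
  refine ((hasDerivAt_pow (n + 1) y).const_mul (c n / (n + 1))).congr_deriv ?_
  push_cast
  field_simp

lemma hasDerivAt_neg_four_mul_log {y : ℝ} (hy : y < 1) :
    HasDerivAt (fun z => -4 * log ((1 + √(1 - z)) / 2)) (2 / (√(1 - y) * (1 + √(1 - y)))) y := by
  have hs : 0 < √(1 - y) := sqrt_pos.2 (by linarith)
  have hsqrt : HasDerivAt (fun z => √(1 - z)) (-1 / (2 * √(1 - y))) y := by
    simpa using ((hasDerivAt_id y).const_sub 1).sqrt (sub_ne_zero.2 hy.ne')
  refine ((((hsqrt.const_add 1).div_const 2).log (by positivity)).const_mul (-4)).congr_deriv ?_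
  field_simp
  ring

lemma hasSum_two_div_sqrt_mul_one_add_sqrt {y : ℝ} (hy : |y| < 1) :
    HasSum (fun n => 2 * (rf (1 / 2) (n + 1) / (n + 1)!) * y ^ n)
      (2 / (√(1 - y) * (1 + √(1 - y)))) := by
  rcases eq_or_ne y 0 with rfl | hy₀
  · convert hasSum_single (f := fun n => 2 * (rf (1 / 2) (n + 1) / (n + 1)!) * (0 : ℝ) ^ n) 0
      (fun n hn => by simp [hn]) using 1
    norm_num [rf]
  have hs : 0 < √(1 - y) := sqrt_pos.2 (by linarith [abs_lt.1 hy])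
  have hs2 : √(1 - y) ^ 2 = 1 - y := sq_sqrt (by linarith [abs_lt.1 hy])
  have htail :
      HasSum (fun n => rf (1 / 2) (n + 1) / (n + 1)! * y ^ (n + 1)) ((√(1 - y))⁻¹ - 1) := by
    rw [sqrt_eq_rpow]
    simpa [rf] using (hasSum_nat_add_iff' 1).2 (hasSum_rf_div_factorial_mul_pow (1 / 2) hy)
  have hval : 2 / y * ((√(1 - y))⁻¹ - 1) = 2 / (√(1 - y) * (1 + √(1 - y))) := by
    have : 1 + √(1 - y) ≠ 0 := by positivity
    field_simp
    nlinarith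
  refine (hval ▸ htail.mul_left (2 / y)).congr_fun fun n => ?_
  rw [pow_succ]
  field_simp

lemma hasSum_div_succ_mul_pow_succ_of_hasDerivAt {c : ℕ → ℝ} {C : ℝ} (hc : ∀ n, |c n| ≤ C)
    {L : ℝ → ℝ} (hL : ∀ y ∈ Ioo (-1 : ℝ) 1, HasDerivAt L (∑' n, c n * y ^ n) y) (hL₀ : L 0 = 0)
    {x : ℝ} (hx : |x| < 1) : HasSum (fun n => c n / (n + 1) * x ^ (n + 1)) (L x) := by
  set F := fun y : ℝ => ∑' n, c n / (n + 1) * y ^ (n + 1)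
  have hF : ∀ y ∈ Ioo (-1 : ℝ) 1, HasDerivAt F (∑' n, c n * y ^ n) y :=
    fun y hy => hasDerivAt_tsum_div_succ_mul_pow_succ hc (abs_lt.2 hy)
  have hFL : EqOn F L (Ioo (-1) 1) := isOpen_Ioo.eqOn_of_deriv_eq isPreconnected_Ioo
    (fun y hy => (hF y hy).differentiableAt.differentiableWithinAt)
    (fun y hy => (hL y hy).differentiableAt.differentiableWithinAt)
    (fun y hy => by rw [(hF y hy).deriv, (hL y hy).deriv]) (x := 0) (by norm_num)
    (by simp [F, hL₀])
  have hcoeff : ∀ n, |c n / (n + 1)| ≤ C := fun n => by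
    rw [abs_div, abs_of_pos (by positivity : (0 : ℝ) < n + 1)]
    exact (div_le_self (abs_nonneg _) (by simp)).trans (hc n)
  rw [← hFL (abs_lt.1 hx)]
  exact (((summable_mul_pow_of_abs_le hcoeff hx).mul_right x).congr fun n => by ring).hasSum

lemma hasSum_neg_four_mul_log {x : ℝ} (hx : |x| < 1) :
    HasSum (fun n => 2 * (rf (1 / 2) (n + 1) / (n + 1)!) / (n + 1) * x ^ (n + 1))
      (-4 * log ((1 + √(1 - x)) / 2)) := by
  refine hasSum_div_succ_mul_pow_succ_of_hasDerivAt (C := 2)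
    (L := fun z => -4 * log ((1 + √(1 - z)) / 2)) (fun n => ?_) (fun y hy => ?_) (by norm_num) hx
  · rw [abs_mul, abs_two]
    linarith [abs_rf_div_factorial_le_one (a := 1 / 2) (by norm_num) (by norm_num) (n + 1)]
  · rw [(hasSum_two_div_sqrt_mul_one_add_sqrt (abs_lt.2 hy)).tsum_eq]
    exact hasDerivAt_neg_four_mul_log hy.2

lemma rf_three_halves_mul_rf_one_div_rf_two_sq (j : ℕ) :
    rf (3 / 2) j * rf 1 j / rf 2 j ^ 2 = 2 * (rf (1 / 2) (j + 1) / (j + 1)!) / (j + 1) := by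
  rw [rf_succ_left, show (1 / 2 : ℝ) + 1 = 3 / 2 by norm_num, rf_one, rf_two, Nat.factorial_succ]
  push_cast
  field_simp

theorem hypergeom_3F2_log (x : ℝ) (hx0 : 0 ≤ x) (hx1 : x < 1) :
    HasSum (fun j : ℕ => rf (3 / 2) j * rf 1 j / (rf 2 j) ^ 2 * x ^ (j + 1))
      (-4 * Real.log ((1 + Real.sqrt (1 - x)) / 2)) := by
  simpa only [rf_three_halves_mul_rf_one_div_rf_two_sq] using
    hasSum_neg_four_mul_log (abs_lt.2 ⟨by linarith, hx1⟩)
end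

section
/- The limit as z → 0 (z real, z ≠ 0) of [√π · cos(πz) · Γ(z + 1/2) − sin(πz) · Γ(z)] / (2πz) equals −log 2. -/
open Real Filter

/-
By the reflection formula, sin(πz)·Γ(z) = π / Γ(1 - z) away from the integers, so near 0
the numerator agrees with G(z) = √π cos(πz) Γ(z + 1/2) - π / Γ(1 - z), which is differentiable at 0
with G(0) = π - π = 0. Hence the limit is G'(0) / (2π). Since Γ'(1/2) = -√π (γ + 2 log 2) and
Γ'(1) = -γ (γ the Euler–Mascheroni constant), we get G'(0) = -π (γ + 2 log 2) + π γ = -2π log 2.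
-/

namespace Real

lemma sin_pi_mul_mul_Gamma {z : ℝ} (hz : sin (π * z) ≠ 0) :
    sin (π * z) * Gamma z = π / Gamma (1 - z) := by
  have reflection := Gamma_mul_Gamma_one_sub z
  have hΓ : Gamma (1 - z) ≠ 0 := by
    intro h
    rw [h, mul_zero, eq_comm, div_eq_zero_iff] at reflection
    exact reflection.elim pi_ne_zero hz
  rw [eq_div_iff hΓ, mul_assoc, reflection, mul_div_cancel₀ _ hz]

lemma eventually_sin_pi_mul_ne_zero : ∀ᶠ z in nhdsWithin (0 : ℝ) {0}ᶜ, sin (π * z) ≠ 0 := by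
  have hIoo : Set.Ioo (-1 : ℝ) 1 ∈ nhds (0 : ℝ) := Ioo_mem_nhds (by norm_num) (by norm_num)
  filter_upwards [nhdsWithin_le_nhds hIoo, self_mem_nhdsWithin] with z ⟨hz₁, hz₂⟩ hz₀
  rw [Ne, sin_eq_zero_iff_of_lt_of_lt (by nlinarith [pi_pos]) (by nlinarith [pi_pos]),
    mul_eq_zero, not_or]
  exact ⟨pi_ne_zero, hz₀⟩

lemma hasDerivAt_sqrt_pi_mul_cos_mul_Gamma_add_half :
    HasDerivAt (fun z => √π * cos (π * z) * Gamma (z + 1 / 2))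
      (-π * (eulerMascheroniConstant + 2 * log 2)) 0 := by
  have hcos : HasDerivAt (fun z => cos (π * z)) 0 0 := by
    simpa using ((hasDerivAt_id (0 : ℝ)).const_mul π).cos
  have hΓ : HasDerivAt (fun z => Gamma (z + 1 / 2))
      (-√π * (eulerMascheroniConstant + 2 * log 2)) 0 :=
    .comp_add_const (f := Gamma) 0 _ (by rw [zero_add]; exact hasDerivAt_Gamma_one_half)
  refine ((hcos.const_mul √π).mul hΓ).congr_deriv ?_
  simp only [mul_zero, zero_mul, zero_add, cos_zero, mul_one, neg_mul, mul_neg, ← mul_assoc,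
    mul_self_sqrt pi_pos.le]

lemma hasDerivAt_pi_div_Gamma_one_sub :
    HasDerivAt (fun z => π / Gamma (1 - z)) (-π * eulerMascheroniConstant) 0 := by
  have hΓ : HasDerivAt (fun z => Gamma (1 - z)) (- -eulerMascheroniConstant) 0 :=
    .comp_const_sub (f := Gamma) 1 0 (by rw [sub_zero]; exact hasDerivAt_Gamma_one)
  refine ((hasDerivAt_const (0 : ℝ) π).div hΓ (by simp)).congr_deriv ?_
  simp

end Real

theorem limit_removable_singularity :
    Tendsto
      (fun z : ℝ =>
        (Real.sqrt Real.pi * Real.cos (Real.pi * z) * Real.Gamma (z + 1 / 2)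
            - Real.sin (Real.pi * z) * Real.Gamma z) / (2 * Real.pi * z))
      (nhdsWithin 0 {(0 : ℝ)}ᶜ) (nhds (-Real.log 2)) := by
  set G : ℝ → ℝ := fun z => √π * cos (π * z) * Gamma (z + 1 / 2) - π / Gamma (1 - z)
  have hG₀ : G 0 = 0 := by
    simp only [G, mul_zero, cos_zero, mul_one, zero_add, sub_zero, Gamma_one, div_one,
      Gamma_one_half_eq, mul_self_sqrt pi_pos.le, sub_self]
  have hG : HasDerivAt G (-(2 * π * log 2)) 0 := by
    refine (hasDerivAt_sqrt_pi_mul_cos_mul_Gamma_add_half.sub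
      hasDerivAt_pi_div_Gamma_one_sub).congr_deriv ?_
    ring
  have hslope := (hasDerivAt_iff_tendsto_slope.mp hG).div_const (2 * π)
  rw [neg_div, mul_div_cancel_left₀ _ (by positivity)] at hslope
  refine hslope.congr' ?_
  filter_upwards [eventually_sin_pi_mul_ne_zero] with z hz
  rw [slope_def_field, hG₀, sin_pi_mul_mul_Gamma hz, sub_zero, sub_zero, div_div, mul_comm z]
end

section
/- Define Λ-coefficients via the isotropic multipolygon generating function: if f(t) = log(1 + t²) − (t²(t²−1)²/(t²+1)⁴) · ₄F₃(1,1,3/2,3/2; 2,2,2; 16t²(t²−1)²/(t²+1)⁴), then the formal power series expansion of exp(f(t)) around t = 0 begins 1 + t⁴ + 2t⁶ + 5t⁸ + 14t¹⁰ + 44t¹², i.e., the Taylor coefficients of exp(f) at t=0 of orders 0,4,6,8,10,12 are 1,1,2,5,14,44 and those of orders 1,2,3,5,7 are 0. -/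
/-- The generalized hypergeometric function ₄F₃(1,1,3/2,3/2; 2,2,2; y). -/
noncomputable def F43 (y : ℝ) : ℝ :=
  ∑' n : ℕ, (rf 1 n) ^ 2 * (rf (3 / 2) n) ^ 2 / ((rf 2 n) ^ 3 * n.factorial) * y ^ n

/-- The hypergeometric argument $t^2(t^2-1)^2/(t^2+1)^4$. -/
noncomputable def g (t : ℝ) : ℝ := t ^ 2 * (t ^ 2 - 1) ^ 2 / (t ^ 2 + 1) ^ 4

/-- The isotropic multipolygon generating function $\Lambda(t) = \exp f(t)$. -/
noncomputable def Λ (t : ℝ) : ℝ :=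
  Real.exp (Real.log (1 + t ^ 2) - g t * F43 (16 * g t))

/-!
Write `u = t²`. The coefficients of ₄F₃ are at most `1`, so its series
converges near `0` and `F43 y` equals its degree-5 Taylor polynomial up to `O(y⁶)`. Since
`g t = O(t²)`, truncating the series, the logarithm and the rational function `g` at order
`u⁶` gives `f(t) = u² + 2u³ + 9/2 u⁴ + 12u⁵ + 112/3 u⁶ + O(u⁷)`, and as this starts at `u²`,
`exp` only needs its cubic Taylor polynomial: `Λ(t) = 1 + u² + 2u³ + 5u⁴ + 14u⁵ + 44u⁶ + O(u⁷)`.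
Finally `Λ` is analytic at `0`, and a polynomial of degree `< n` that is `O(tⁿ)` at `0`
vanishes, so this expansion determines the Taylor coefficients of `Λ` up to order `13`.
-/

open Filter Asymptotics Finset Topology

theorem tendsto_pow_nhds_zero_of_ne_zero {M : Type*} [MonoidWithZero M] [TopologicalSpace M]
    [ContinuousMul M] {n : ℕ} (hn : n ≠ 0) : Tendsto (· ^ n) (𝓝 (0 : M)) (𝓝 0) := by
  simpa [zero_pow hn] using (continuous_pow n).tendsto (0 : M)

section TaylorCoefficients

variable {𝕜 : Type*} [NontriviallyNormedField 𝕜]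

theorem isBigO_pow_mul_of_continuousAt {W : 𝕜 → 𝕜} (hW : ContinuousAt W 0) (n : ℕ) :
    (fun x => x ^ n * W x) =O[𝓝 0] (· ^ n) := by
  simpa using (isBigO_refl (fun x : 𝕜 => x ^ n) (𝓝 0)).mul (hW.tendsto.isBigO_one 𝕜)

theorem HasFPowerSeriesAt.isBigO_sub_sum_coeff {f : 𝕜 → 𝕜} {p : FormalMultilinearSeries 𝕜 𝕜 𝕜}
    (hf : HasFPowerSeriesAt f p 0) (n : ℕ) :
    (fun y => f y - ∑ k ∈ range n, p.coeff k * y ^ k) =O[𝓝 0] (· ^ n) := by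
  have h := hf.isBigO_sub_partialSum_pow n
  simp only [zero_add] at h
  refine (h.congr_left fun y => ?_).trans (isBigO_of_le _ fun y => by simp)
  simp [FormalMultilinearSeries.partialSum, mul_comm]

theorem coeff_eq_zero_of_isBigO_sum {c : ℕ → 𝕜} {n : ℕ}
    (h : (fun x => ∑ k ∈ range n, c k * x ^ k) =O[𝓝 0] (· ^ n)) : ∀ k < n, c k = 0 := by
  intro k
  induction k using Nat.strong_induction_on with
  | _ k ih =>
  intro hk
  have hsplit : ∀ x : 𝕜, ∑ j ∈ range n, c j * x ^ j
      = c k * x ^ k + ∑ j ∈ Ico (k + 1) n, c j * x ^ j := by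
    intro x
    rw [← sum_range_add_sum_Ico _ (Nat.succ_le_of_lt hk), sum_range_succ,
      sum_eq_zero fun j hj => by rw [ih j (mem_range.1 hj) ((mem_range.1 hj).trans hk), zero_mul],
      zero_add]
  have htail : (fun x : 𝕜 => ∑ j ∈ Ico (k + 1) n, c j * x ^ j) =o[𝓝 0] (· ^ k) :=
    IsLittleO.fun_sum fun j hj => (isLittleO_pow_pow (mem_Ico.1 hj).1).const_mul_left (c j)
  have hlead : (fun x : 𝕜 => c k * x ^ k) =o[𝓝 0] (· ^ k) := by
    simpa [hsplit] using (h.trans_isLittleO (isLittleO_pow_pow hk)).sub htail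
  by_contra hck
  refine isLittleO_irrefl' ?_ ((isLittleO_const_mul_left_iff hck).1 hlead)
  have hne : ∀ᶠ x in 𝓝[≠] (0 : 𝕜), ‖x ^ k‖ ≠ 0 :=
    eventually_mem_nhdsWithin.mono fun x hx => norm_ne_zero_iff.2 (pow_ne_zero k hx)
  exact hne.frequently.filter_mono nhdsWithin_le_nhds

theorem AnalyticAt.iteratedDeriv_eq_of_isBigO_sub_sum [CharZero 𝕜] [CompleteSpace 𝕜]
    {f : 𝕜 → 𝕜} (hf : AnalyticAt 𝕜 f 0) {n : ℕ} {q : ℕ → 𝕜}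
    (h : (fun x => f x - ∑ k ∈ range n, q k * x ^ k) =O[𝓝 0] (· ^ n)) :
    ∀ k < n, iteratedDeriv k f 0 = k.factorial * q k := by
  obtain ⟨F, hF, hfF⟩ := hf.exists_eq_sum_add_pow_mul n
  have hpoly : (fun x => ∑ k ∈ range n, (iteratedDeriv k f 0 / k.factorial - q k) * x ^ k)
      =O[𝓝 0] (· ^ n) := by
    refine (h.sub (isBigO_pow_mul_of_continuousAt hF.continuousAt n)).congr_left fun x => ?_
    rw [hfF x, smul_eq_mul, add_sub_right_comm, add_sub_cancel_right, ← sum_sub_distrib]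
    exact sum_congr rfl fun k _ => by rw [smul_eq_mul]; ring
  intro k hk
  have := coeff_eq_zero_of_isBigO_sum hpoly k hk
  rw [sub_eq_zero, div_eq_iff (by exact_mod_cast k.factorial_ne_zero)] at this
  rw [this, mul_comm]

end TaylorCoefficients

namespace Real

theorem isBigO_exp_sub_sum {n : ℕ} (hn : 0 < n) :
    (fun x => exp x - ∑ k ∈ range n, x ^ k / k.factorial) =O[𝓝 0] (· ^ n) := by
  refine isBigO_iff.2 ⟨n.succ / (n.factorial * n), ?_⟩
  filter_upwards [Metric.closedBall_mem_nhds (0 : ℝ) one_pos] with x hx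
  rw [Metric.mem_closedBall, dist_zero_right] at hx
  simpa [mul_comm, abs_pow] using exp_bound hx hn

theorem isBigO_log_one_add_add_sum (n : ℕ) :
    (fun x => log (1 + x) + ∑ k ∈ range n, (-x) ^ (k + 1) / (k + 1)) =O[𝓝 0] (· ^ (n + 1)) := by
  refine isBigO_iff.2 ⟨2, ?_⟩
  filter_upwards [Metric.closedBall_mem_nhds (0 : ℝ) one_half_pos] with x hx
  rw [Metric.mem_closedBall, dist_zero_right, norm_eq_abs] at hx
  have h := abs_log_sub_add_sum_range_le (x := -x) (by rw [abs_neg]; linarith) n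
  rw [sub_neg_eq_add, abs_neg, add_comm (∑ _ ∈ _, _)] at h
  calc ‖log (1 + x) + ∑ k ∈ range n, (-x) ^ (k + 1) / (k + 1)‖ ≤ |x| ^ (n + 1) / (1 - |x|) := h
    _ ≤ 2 * ‖x ^ (n + 1)‖ := by
      rw [norm_pow, norm_eq_abs, div_le_iff₀ (by linarith)]
      nlinarith [pow_nonneg (abs_nonneg x) (n + 1)]

end Real

namespace Multipolygon

theorem rf_pos {a : ℝ} (ha : 0 < a) (n : ℕ) : 0 < rf a n := by
  induction n with
  | zero => exact zero_lt_one
  | succ n ih => rw [rf]; positivity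

theorem rf_mono {a b : ℝ} (ha : 0 < a) (hab : a ≤ b) (n : ℕ) : rf a n ≤ rf b n := by
  induction n with
  | zero => exact le_rfl
  | succ n ih =>
    exact mul_le_mul ih (by linarith) (by positivity) (rf_pos (ha.trans_le hab) n).le

theorem rf_one (n : ℕ) : rf 1 n = n.factorial := by
  induction n with
  | zero => simp [rf]
  | succ n ih => rw [rf, ih, Nat.factorial_succ]; push_cast; ring

noncomputable def F43Coeff (n : ℕ) : ℝ :=
  (rf 1 n) ^ 2 * (rf (3 / 2) n) ^ 2 / ((rf 2 n) ^ 3 * n.factorial)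

theorem F43Coeff_nonneg (n : ℕ) : 0 ≤ F43Coeff n := by
  have := rf_pos (a := 2) two_pos n
  unfold F43Coeff; positivity

theorem F43Coeff_le_one (n : ℕ) : F43Coeff n ≤ 1 := by
  have h1 := rf_mono (a := 1) (b := 2) one_pos one_le_two n
  have h32 := rf_mono (a := 3 / 2) (b := 2) (by norm_num) (by norm_num) n
  have h0 := rf_pos (a := 3 / 2) (by norm_num) n
  have h2 := rf_pos (a := 2) two_pos n
  rw [F43Coeff, div_le_one (by positivity)]
  calc rf 1 n ^ 2 * rf (3 / 2) n ^ 2 = n.factorial * rf 1 n * rf (3 / 2) n ^ 2 := by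
        rw [rf_one]; ring
    _ ≤ n.factorial * rf 2 n * rf 2 n ^ 2 := by gcongr
    _ = rf 2 n ^ 3 * n.factorial := by ring

noncomputable def F43Series : FormalMultilinearSeries ℝ ℝ ℝ :=
  FormalMultilinearSeries.ofScalars ℝ F43Coeff

theorem one_le_radius_F43Series : 1 ≤ F43Series.radius := by
  simpa using F43Series.le_radius_of_bound 1 (r := 1) fun n => by
    simpa [F43Series, FormalMultilinearSeries.ofScalars_norm, abs_of_nonneg (F43Coeff_nonneg n)]
      using F43Coeff_le_one n

theorem hasFPowerSeriesAt_F43 : HasFPowerSeriesAt F43 F43Series 0 := by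
  have h := F43Series.hasFPowerSeriesOnBall (one_pos.trans_le one_le_radius_F43Series)
  rw [show F43Series.sum = F43 from FormalMultilinearSeries.ofScalarsSum_eq_tsum F43Coeff] at h
  exact h.hasFPowerSeriesAt

-- Written so that `g t = G (t ^ 2)` holds definitionally.
noncomputable def G (u : ℝ) : ℝ := u * (u - 1) ^ 2 / (u + 1) ^ 4

noncomputable def E (u : ℝ) : ℝ := Real.log (1 + u) - G u * F43 (16 * G u)

noncomputable def L (u : ℝ) : ℝ := Real.exp (E u)

theorem Λ_eq_L_comp_sq : Λ = fun t => L (t ^ 2) := rfl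

theorem G_isBigO : G =O[𝓝 0] (· ^ 1) := by
  refine (isBigO_pow_mul_of_continuousAt (W := fun u : ℝ => (u - 1) ^ 2 / (u + 1) ^ 4)
    (by fun_prop (disch := norm_num)) 1).congr_left fun u => ?_
  rw [G, pow_one, mul_div_assoc]

theorem hypergeometric_term_sub_sum_isBigO :
    (fun u => G u * F43 (16 * G u) - ∑ k ∈ range 6, F43Coeff k * (16 * G u) ^ k * G u)
      =O[𝓝 0] (· ^ 7) := by
  have hG16 : (fun u => 16 * G u) =O[𝓝 0] (· ^ 1) := G_isBigO.const_mul_left 16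
  have hF := (hasFPowerSeriesAt_F43.isBigO_sub_sum_coeff 6).comp_tendsto
    (hG16.trans_tendsto (tendsto_pow_nhds_zero_of_ne_zero one_ne_zero))
  refine (G_isBigO.mul (hF.trans (hG16.pow 6))).congr (fun u => ?_) fun u => ?_
  · simp only [Function.comp, F43Series, FormalMultilinearSeries.coeff_ofScalars, mul_sub,
      mul_sum]
    exact congrArg _ (sum_congr rfl fun k _ => by ring)
  · simp only [← pow_mul, ← pow_add]

noncomputable def ETrunc (u : ℝ) : ℝ :=
  u ^ 2 + 2 * u ^ 3 + 9 / 2 * u ^ 4 + 12 * u ^ 5 + 112 / 3 * u ^ 6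

-- Obtained by exact polynomial division; the estimates below only use that it is a polynomial.
noncomputable def ERemainderNum (u : ℝ) : ℝ :=
  420795 - 4784425 / 2 * u + 22590995 / 3 * u ^ 2 - 196206503 / 10 * u ^ 3
    + 110300739 / 5 * u ^ 4 - 957595471 / 20 * u ^ 5 - 20324311 / 5 * u ^ 6
    - 757537603 / 10 * u ^ 7 - 247137802 / 3 * u ^ 8 - 124021836 * u ^ 9 - 141484234 * u ^ 10
    - 143134151 * u ^ 11 - 124576214 * u ^ 12 - 932069297 / 10 * u ^ 13
    - 298158234 / 5 * u ^ 14 - 161941491 / 5 * u ^ 15 - 73947489 / 5 * u ^ 16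
    - 168094021 / 30 * u ^ 17 - 8646979 / 5 * u ^ 18 - 4237107 / 10 * u ^ 19
    - 1189087 / 15 * u ^ 20 - 212759 / 20 * u ^ 21 - 4559 / 5 * u ^ 22 - 75 / 2 * u ^ 23

theorem truncations_sub_ETrunc {u : ℝ} (hu : u ≠ -1) :
    -(∑ k ∈ range 6, (-u) ^ (k + 1) / (k + 1)) - ∑ k ∈ range 6, F43Coeff k * (16 * G u) ^ k * G u
      - ETrunc u = u ^ 7 * (ERemainderNum u / (u + 1) ^ 24) := by
  have hu' : u + 1 ≠ 0 := fun h => hu (by linarith)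
  obtain ⟨h0, h1, h2, h3, h4, h5⟩ : F43Coeff 0 = 1 ∧ F43Coeff 1 = 9 / 32 ∧ F43Coeff 2 = 25 / 192 ∧
      F43Coeff 3 = 1225 / 16384 ∧ F43Coeff 4 = 3969 / 81920 ∧ F43Coeff 5 = 17787 / 524288 := by
    norm_num [F43Coeff, rf, Nat.factorial]
  simp only [sum_range_succ, sum_range_zero, h0, h1, h2, h3, h4, h5]
  unfold G ETrunc ERemainderNum
  field_simp
  ring

theorem E_sub_ETrunc_isBigO : (fun u => E u - ETrunc u) =O[𝓝 0] (· ^ 7) := by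
  have hrem : (fun u => u ^ 7 * (ERemainderNum u / (u + 1) ^ 24)) =O[𝓝 0] (· ^ 7) :=
    isBigO_pow_mul_of_continuousAt (by unfold ERemainderNum; fun_prop (disch := norm_num)) 7
  have h := ((Real.isBigO_log_one_add_add_sum 6).sub hypergeometric_term_sub_sum_isBigO).add hrem
  refine h.congr' ?_ EventuallyEq.rfl
  filter_upwards [eventually_ne_nhds (by norm_num : (0 : ℝ) ≠ -1)] with u hu
  rw [← truncations_sub_ETrunc hu, E]
  ring

noncomputable def LTrunc (u : ℝ) : ℝ := 1 + u ^ 2 + 2 * u ^ 3 + 5 * u ^ 4 + 14 * u ^ 5 + 44 * u ^ 6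

noncomputable def expRemainder (u : ℝ) : ℝ :=
  22 + 1817 / 24 * u + 145 * u ^ 2 + 7243 / 24 * u ^ 3 + 7451 / 12 * u ^ 4
    + 163403 / 144 * u ^ 5 + 2099 / 2 * u ^ 6 + 20654 / 9 * u ^ 7 + 33280 / 9 * u ^ 8
    + 5824 * u ^ 9 + 25088 / 3 * u ^ 10 + 702464 / 81 * u ^ 11

theorem sum_ETrunc_pow_div_factorial_sub_LTrunc (u : ℝ) :
    ∑ k ∈ range 4, ETrunc u ^ k / k.factorial - LTrunc u = u ^ 7 * expRemainder u := by
  simp only [sum_range_succ, sum_range_zero, Nat.factorial]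
  unfold ETrunc LTrunc expRemainder
  push_cast
  ring

theorem L_sub_LTrunc_isBigO : (fun u => L u - LTrunc u) =O[𝓝 0] (· ^ 7) := by
  have hE := E_sub_ETrunc_isBigO
  have hETrunc : ETrunc =O[𝓝 0] (· ^ 2) :=
    (isBigO_pow_mul_of_continuousAt (W := fun u : ℝ => 1 + 2 * u + 9 / 2 * u ^ 2 + 12 * u ^ 3
      + 112 / 3 * u ^ 4) (by fun_prop) 2).congr_left fun u => by rw [ETrunc]; ring
  have hcorr :
      (fun u => Real.exp (ETrunc u) * (Real.exp (E u - ETrunc u) - 1)) =O[𝓝 0] (· ^ 7) := by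
    have hexp := (Real.isBigO_exp_sub_sum one_pos).comp_tendsto
      (hE.trans_tendsto (tendsto_pow_nhds_zero_of_ne_zero (by norm_num)))
    have hbdd : (fun u => Real.exp (ETrunc u)) =O[𝓝 0] (fun _ => (1 : ℝ)) :=
      ((Real.continuous_exp.comp (by unfold ETrunc; fun_prop)).tendsto 0).isBigO_one ℝ
    simpa using hbdd.mul (hexp.trans (by simpa [Function.comp_def] using hE))
  have htaylor := ((Real.isBigO_exp_sub_sum (n := 4) (by norm_num)).comp_tendsto
      (hETrunc.trans_tendsto (tendsto_pow_nhds_zero_of_ne_zero two_ne_zero))).trans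
    ((hETrunc.pow 4).trans
      (by simpa [← pow_mul] using (isLittleO_pow_pow (by norm_num : 7 < 8)).isBigO))
  have hrem : (fun u => u ^ 7 * expRemainder u) =O[𝓝 0] (· ^ 7) :=
    isBigO_pow_mul_of_continuousAt (by unfold expRemainder; fun_prop) 7
  refine ((hcorr.add htaylor).add hrem).congr_left fun u => ?_
  rw [← sum_ETrunc_pow_div_factorial_sub_LTrunc, L, Function.comp_apply, mul_sub,
    ← Real.exp_add]
  ring_nf

theorem analyticAt_L : AnalyticAt ℝ L 0 := by
  have hG : AnalyticAt ℝ G 0 := by unfold G; fun_prop (disch := norm_num)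
  have h16G : AnalyticAt ℝ (fun u => 16 * G u) 0 := analyticAt_const.mul hG
  have hlog : AnalyticAt ℝ (fun u => Real.log (1 + u)) 0 :=
    (analyticAt_const.add analyticAt_id).log (by norm_num)
  exact analyticAt_rexp.comp
    (hlog.sub (hG.mul (hasFPowerSeriesAt_F43.analyticAt.comp_of_eq h16G (by simp [G]))))

def ΛCoeff (k : ℕ) : ℝ := [1, 0, 0, 0, 1, 0, 2, 0, 5, 0, 14, 0, 44, 0].getD k 0

theorem Λ_sub_sum_isBigO :
    (fun t => Λ t - ∑ k ∈ range 14, ΛCoeff k * t ^ k) =O[𝓝 0] (· ^ 14) := by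
  refine (L_sub_LTrunc_isBigO.comp_tendsto (tendsto_pow_nhds_zero_of_ne_zero two_ne_zero)).congr
    (fun t => ?_) fun t => by simp [← pow_mul]
  simp [Λ_eq_L_comp_sq, sum_range_succ, ΛCoeff, LTrunc]
  ring

end Multipolygon

theorem multipolygon_series_coefficients :
    iteratedDeriv 0 Λ 0 = 1 ∧
    iteratedDeriv 1 Λ 0 = 0 ∧
    iteratedDeriv 2 Λ 0 = 0 ∧
    iteratedDeriv 3 Λ 0 = 0 ∧
    iteratedDeriv 4 Λ 0 / (Nat.factorial 4) = 1 ∧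
    iteratedDeriv 5 Λ 0 = 0 ∧
    iteratedDeriv 6 Λ 0 / (Nat.factorial 6) = 2 ∧
    iteratedDeriv 7 Λ 0 = 0 ∧
    iteratedDeriv 8 Λ 0 / (Nat.factorial 8) = 5 ∧
    iteratedDeriv 10 Λ 0 / (Nat.factorial 10) = 14 ∧
    iteratedDeriv 12 Λ 0 / (Nat.factorial 12) = 44 := by
  have hΛ : AnalyticAt ℝ Λ 0 := by
    rw [Multipolygon.Λ_eq_L_comp_sq]
    exact Multipolygon.analyticAt_L.comp_of_eq (by fun_prop) (zero_pow two_ne_zero)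
  have h := hΛ.iteratedDeriv_eq_of_isBigO_sub_sum Multipolygon.Λ_sub_sum_isBigO
  refine ⟨?_, ?_, ?_, ?_, ?_, ?_, ?_, ?_, ?_, ?_, ?_⟩ <;>
    rw [h] <;> norm_num [Multipolygon.ΛCoeff, Nat.factorial]
end
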